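/- Until on ultimately periodic words reduces to the finite prefix: for an ultimately periodic word uv^ω with v nonempty, and for |u| ≤ i < |uv|, the suffix (uv^ω)[i,∞) satisfies φ₁ U φ₂ if and only if there exists j with |u| ≤ j < |uv| such that (uv^ω)[j,∞) ⊨ φ₂ and for all t ∈ I_{u,v}(i,j), (uv^ω)[t,∞) ⊨ φ₁, where I_{u,v}(i,j) = {i,…,j−1} if i ≤ j and I_{u,v}(i,j) = {|u|,…,j−1} ∪ {i,…,|uv|−1} if i > j. -/

import Mathlib

def upWord {A : Type*} (u v : List A) (hv : v ≠ []) : ℕ → A :=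
  fun n =>
    if h : n < u.length then u.get ⟨n, h⟩
    else v.get ⟨(n - u.length) % v.length, Nat.mod_lt _ (List.length_pos_of_ne_nil hv)⟩

def suffix {A : Type*} (w : ℕ → A) (i : ℕ) : ℕ → A := fun n => w (i + n)

inductive LTL (P : Type*) where
  | atom : P → LTL P
  | not : LTL P → LTL P
  | or : LTL P → LTL P → LTL P
  | next : LTL P → LTL P
  | untl : LTL P → LTL P → LTL P

/-- Satisfaction of an LTL formula at position `i` of the infinite word `w`. -/
def SatAt {P : Type*} (w : ℕ → Set P) : ℕ → LTL P → Prop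
  | i, .atom p => p ∈ w i
  | i, .not φ => ¬ SatAt w i φ
  | i, .or φ ψ => SatAt w i φ ∨ SatAt w i ψ
  | i, .next φ => SatAt w (i + 1) φ
  | i, .untl φ ψ => ∃ j, i ≤ j ∧ SatAt w j ψ ∧ ∀ t, i ≤ t → t < j → SatAt w t φ

/-- The index set `I_{u,v}(i,j)` from the until-constraint. -/
def Iset (lu lv i j : ℕ) : Set ℕ :=
  if i ≤ j then Set.Ico i j else Set.Ico lu j ∪ Set.Ico i (lu + lv)

/-! On the periodic part of `uv^ω` satisfaction is invariant under `x ↦ x + |v|`, because it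
depends only on the suffix read from `x`. Hence the least witness `j` of an until at a position
`i ≥ |u|` lies in `[i, i + |v|)`. If `j` overshoots the first period, shifting it back by `|v|`
folds the part of `[i, j)` beyond the period onto `[|u|, j - |v|)`, which is how the second
shape of `I_{u,v}(i, j)` arises. -/

section SatAt

variable {P : Type*}

theorem SatAt_suffix (w : ℕ → Set P) (i : ℕ) (φ : LTL P) (n : ℕ) :
    SatAt (suffix w i) n φ ↔ SatAt w (i + n) φ := by
  induction φ generalizing n with
  | atom p => rfl
  | not φ ih => exact not_congr (ih n)
  | or φ ψ ihφ ihψ => exact or_congr (ihφ n) (ihψ n)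
  | next φ ih => exact ih (n + 1)
  | untl φ ψ ihφ ihψ =>
    simp only [SatAt, ihφ, ihψ]
    constructor
    · rintro ⟨j, hnj, hψ, hφ⟩
      refine ⟨i + j, by omega, hψ, fun t hit htj => ?_⟩
      simpa [Nat.add_sub_cancel' (show i ≤ t by omega)] using hφ (t - i) (by omega) (by omega)
    · rintro ⟨j, hij, hψ, hφ⟩
      refine ⟨j - i, by omega, by rwa [Nat.add_sub_cancel' (by omega)], fun t hnt htj => ?_⟩
      exact hφ (i + t) (by omega) (by omega)

theorem SatAt_iff_of_suffix_eq {w : ℕ → Set P} {i k : ℕ} (h : suffix w i = suffix w k)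
    (φ : LTL P) : SatAt w i φ ↔ SatAt w k φ := by
  simpa [SatAt_suffix] using (h ▸ Iff.rfl : SatAt (suffix w i) 0 φ ↔ SatAt (suffix w k) 0 φ)

section EventuallyPeriodic

variable {w : ℕ → Set P} {L p : ℕ}

theorem SatAt_add_period (hw : ∀ n, L ≤ n → w (n + p) = w n) {x : ℕ} (hx : L ≤ x)
    (φ : LTL P) : SatAt w (x + p) φ ↔ SatAt w x φ := by
  refine SatAt_iff_of_suffix_eq (funext fun n => ?_) φ
  simpa [suffix, Nat.add_right_comm] using hw (x + n) (by omega)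

theorem SatAt_untl_iff_exists_lt_add_period (hw : ∀ n, L ≤ n → w (n + p) = w n) (hp : 0 < p)
    {i : ℕ} (hi : L ≤ i) (φ ψ : LTL P) :
    SatAt w i (.untl φ ψ) ↔
      ∃ j, i ≤ j ∧ j < i + p ∧ SatAt w j ψ ∧ ∀ t, i ≤ t → t < j → SatAt w t φ := by
  refine ⟨fun h => ?_, fun ⟨j, hij, _, hψ, hφ⟩ => ⟨j, hij, hψ, hφ⟩⟩
  classical
  rw [SatAt] at h
  obtain ⟨hij, hψ, hφ⟩ := Nat.find_spec h
  refine ⟨Nat.find h, hij, ?_, hψ, hφ⟩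
  by_contra! hlate
  refine Nat.find_min h (m := Nat.find h - p) (by omega)
    ⟨by omega, ?_, fun t hit htj => hφ t hit (by omega)⟩
  rwa [← SatAt_add_period hw (by omega), Nat.sub_add_cancel (by omega)]

end EventuallyPeriodic

end SatAt

theorem forall_mem_Iset_iff_of_lt {Q : ℕ → Prop} {L p i j : ℕ}
    (hQ : ∀ x, L ≤ x → (Q (x + p) ↔ Q x)) (hLj : L ≤ j) (hji : j < i) (hi : i ≤ L + p) :
    (∀ t ∈ Iset L p i j, Q t) ↔ ∀ t, i ≤ t → t < j + p → Q t := by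
  simp only [Iset, if_neg (not_le.2 hji), Set.mem_union, Set.mem_Ico]
  constructor
  · intro h t hit htj
    rcases lt_or_ge t (L + p) with htp | htp
    · exact h t (.inr ⟨hit, htp⟩)
    · rw [← Nat.sub_add_cancel (show p ≤ t by omega), hQ _ (by omega)]
      exact h _ (.inl ⟨by omega, by omega⟩)
  · rintro h t (⟨hLt, htj⟩ | ⟨hit, htp⟩)
    · exact (hQ t hLt).1 (h _ (by omega) (by omega))
    · exact h t hit (by omega)

theorem upWord_add_length {A : Type*} (u v : List A) (hv : v ≠ []) {n : ℕ}
    (hn : u.length ≤ n) : upWord u v hv (n + v.length) = upWord u v hv n := by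
  simp only [upWord, dif_neg (show ¬n + v.length < u.length by omega),
    dif_neg (show ¬n < u.length by omega), Nat.sub_add_comm hn, Nat.add_mod_right]

theorem until_on_prefix {P : Type*} (u v : List (Set P)) (hv : v ≠ [])
    (φ₁ φ₂ : LTL P) (i : ℕ) (h1 : u.length ≤ i) (h2 : i < u.length + v.length) :
    SatAt (upWord u v hv) i (.untl φ₁ φ₂) ↔
      ∃ j, u.length ≤ j ∧ j < u.length + v.length ∧ SatAt (upWord u v hv) j φ₂ ∧
        ∀ t ∈ Iset u.length v.length i j, SatAt (upWord u v hv) t φ₁ := by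
  have hw : ∀ n, u.length ≤ n → upWord u v hv (n + v.length) = upWord u v hv n :=
    fun n => upWord_add_length u v hv
  have hφ₁ := fun x => SatAt_add_period hw (x := x) (φ := φ₁)
  rw [SatAt_untl_iff_exists_lt_add_period hw (List.length_pos_of_ne_nil hv) h1]
  constructor
  · rintro ⟨j, hij, hjp, hψ, hφ⟩
    rcases lt_or_ge j (u.length + v.length) with hj | hj
    · exact ⟨j, by omega, hj, hψ, by simpa [Iset, hij] using hφ⟩
    · have hj' : j - v.length + v.length = j := Nat.sub_add_cancel (by omega)
      refine ⟨j - v.length, by omega, by omega, ?_, ?_⟩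
      · rwa [← SatAt_add_period hw (by omega), hj']
      · rwa [forall_mem_Iset_iff_of_lt hφ₁ (by omega) (by omega) h2.le, hj']
  · rintro ⟨j, hLj, hjL, hψ, hφ⟩
    rcases le_or_gt i j with hij | hji
    · exact ⟨j, hij, by omega, hψ, fun t hit htj => hφ t (by simp [Iset, hij, hit, htj])⟩
    · exact ⟨j + v.length, by omega, by omega, (SatAt_add_period hw hLj φ₂).2 hψ,
        (forall_mem_Iset_iff_of_lt hφ₁ hLj hji h2.le).1 hφ⟩
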